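/- arXiv:2212.06418 — 10 statements merged into one kernel-verified Lean document; each statement's English description precedes it below -/
import Mathlib

section
/- Let X be a monotone determined space and U ⊆ X. If U is an upper set and U = U^{↓≪}, then U is monotone determined open. -/
open Set Topology

universe u v

variable {X : Type u}

/-- The specialization order: `x ≤ y` iff `x` lies in the closure of `{y}`. -/
def sle [TopologicalSpace X] (x y : X) : Prop := x ∈ closure ({y} : Set X)

/-- `↑A` with respect to the specialization order. -/
def upSet [TopologicalSpace X] (A : Set X) : Set X := {x | ∃ a ∈ A, sle a x}

/-- `↓A` with respect to the specialization order. -/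
def downSet [TopologicalSpace X] (A : Set X) : Set X := {x | ∃ a ∈ A, sle x a}

/-- A subset is directed: nonempty and any two elements have an upper bound in it. -/
def DirSet [TopologicalSpace X] (D : Set X) : Prop :=
  D.Nonempty ∧ ∀ a ∈ D, ∀ b ∈ D, ∃ c ∈ D, sle a c ∧ sle b c

/-- `D →_τ x`: every open set containing `x` meets `D`. -/
def DConv [TopologicalSpace X] (D : Set X) (x : X) : Prop :=
  ∀ U : Set X, IsOpen U → x ∈ U → (D ∩ U).Nonempty

/-- Monotone determined open set. -/
def MDOpen [TopologicalSpace X] (U : Set X) : Prop :=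
  ∀ D : Set X, DirSet D → ∀ x ∈ U, DConv D x → (D ∩ U).Nonempty

/-- Monotone determined space: every monotone determined open set is open. -/
def MonDet (X : Type u) [TopologicalSpace X] : Prop :=
  ∀ U : Set X, MDOpen U → IsOpen U

/-- `x ≪_d y`. -/
def dwb [TopologicalSpace X] (x y : X) : Prop :=
  ∀ D : Set X, DirSet D → DConv D y → ∃ d ∈ D, sle x d

/-- `⇓_d x = {y | y ≪_d x}`. -/
def dDown [TopologicalSpace X] (x : X) : Set X := {y | dwb y x}

/-- `⇑_d x = {y | x ≪_d y}`. -/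
def dUp [TopologicalSpace X] (x : X) : Set X := {y | dwb x y}

/-- c-space. -/
def CSpace (X : Type u) [TopologicalSpace X] : Prop :=
  ∀ U : Set X, IsOpen U → ∀ y ∈ U, ∃ x : X, y ∈ interior (upSet {x}) ∧ upSet {x} ⊆ U

/-- Locally hypercompact space. -/
def LocallyHypercompact (X : Type u) [TopologicalSpace X] : Prop :=
  ∀ U : Set X, IsOpen U → ∀ x ∈ U, ∃ F : Set X, F.Finite ∧ F.Nonempty ∧
    x ∈ interior (upSet F) ∧ upSet F ⊆ U

/-- `A^{↓≪} = {x ∈ A : ⇓_d x ∩ A ≠ ∅}`. -/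
def lowApprox [TopologicalSpace X] (A : Set X) : Set X :=
  {x | x ∈ A ∧ (dDown x ∩ A).Nonempty}

/-- `A^{↑≪} = {x : ⇓_d x ⊆ ↓A}`. -/
def upApprox [TopologicalSpace X] (A : Set X) : Set X :=
  {x | dDown x ⊆ downSet A}

/-- `Ã = {x : ∃ directed D ⊆ ↓A ∩ ↓x with D →_τ x}`. -/
def tilde [TopologicalSpace X] (A : Set X) : Set X :=
  {x | ∃ D : Set X, DirSet D ∧ D ⊆ downSet A ∩ downSet {x} ∧ DConv D x}

/-- `Â = {x : ∃ directed D ⊆ ↓A with D →_τ x}`. -/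
def hatSet [TopologicalSpace X] (A : Set X) : Set X :=
  {x | ∃ D : Set X, DirSet D ∧ D ⊆ downSet A ∧ DConv D x}

/-- One-step closure. -/
def OneStepClosure (X : Type u) [TopologicalSpace X] : Prop :=
  ∀ A : Set X, tilde A = closure A

/-- Weak one-step closure. -/
def WeakOneStepClosure (X : Type u) [TopologicalSpace X] : Prop :=
  ∀ A : Set X, hatSet A = closure A

/-- d-meet continuous space. -/
def DMeetCont (X : Type u) [TopologicalSpace X] : Prop :=
  MonDet X ∧ ∀ (D : Set X) (x : X), DirSet D → DConv D x →
    x ∈ closure (downSet D ∩ downSet {x})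

/-- An ideal on `J`: closed under subsets and finite unions. -/
def IsIdeal {J : Type v} (I : Set (Set J)) : Prop :=
  (∀ A ∈ I, ∀ B : Set J, B ⊆ A → B ∈ I) ∧ ∀ A ∈ I, ∀ B ∈ I, A ∪ B ∈ I

/-- IS-convergence of a net with respect to an ideal. -/
def ISConv [TopologicalSpace X] {J : Type v} (xj : J → X) (I : Set (Set J)) (x : X) : Prop :=
  ∃ D : Set X, DirSet D ∧ DConv D x ∧ ∀ d ∈ D, {j | ¬ sle d (xj j)} ∈ I

/-- I-convergence of a net with respect to an (explicit) topology. -/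
def IConvT {J : Type v} (t : TopologicalSpace X) (xj : J → X) (I : Set (Set J)) (x : X) : Prop :=
  ∀ U : Set X, t.IsOpen U → x ∈ U → {j | xj j ∉ U} ∈ I

/-- ISL-convergence. -/
def ISLConv [TopologicalSpace X] {J : Type v} (xj : J → X) (I : Set (Set J)) (x : X) : Prop :=
  ISConv xj I x ∧ ∀ y : X, {j | ¬ sle y (xj j)} ∈ I → sle y x

/-- A directed family of nonempty finite subsets (Smyth preorder). -/
def DirFam [TopologicalSpace X] (F : Set (Set X)) : Prop :=
  (∀ G ∈ F, G.Finite ∧ G.Nonempty) ∧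
  ∀ G1 ∈ F, ∀ G2 ∈ F, ∃ G ∈ F, G ⊆ upSet G1 ∩ upSet G2

/-- `ℱ →_τ x`: every open set containing `x` contains a member of `ℱ`. -/
def FConv [TopologicalSpace X] (F : Set (Set X)) (x : X) : Prop :=
  ∀ U : Set X, IsOpen U → x ∈ U → ∃ G ∈ F, G ⊆ U

/-- IGS-convergence. -/
def IGSConv [TopologicalSpace X] {J : Type v} (xj : J → X) (I : Set (Set J)) (x : X) : Prop :=
  ∃ F : Set (Set X), DirFam F ∧ FConv F x ∧ ∀ G ∈ F, {j | xj j ∉ upSet G} ∈ I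

/-- IGSL-convergence. -/
def IGSLConv [TopologicalSpace X] {J : Type v} (xj : J → X) (I : Set (Set J)) (x : X) : Prop :=
  IGSConv xj I x ∧
    ∀ G : Set X, G.Finite → G.Nonempty → {j | xj j ∉ upSet G} ∈ I → x ∈ upSet G

/-- The Lawson topology: generated by the open sets of `τ` and complements of `↑y`. -/
def lawson (X : Type u) [TopologicalSpace X] : TopologicalSpace X :=
  TopologicalSpace.generateFrom {V | IsOpen V ∨ ∃ y : X, V = (upSet {y})ᶜ}

/-- The family `IS(X)`. -/
def memIS (X : Type u) [TopologicalSpace X] (U : Set X) : Prop :=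
  ∀ (J : Type u) [Preorder J], Nonempty J → (∀ a b : J, ∃ c, a ≤ c ∧ b ≤ c) →
    ∀ (xj : J → X) (I : Set (Set J)), IsIdeal I →
      ∀ x ∈ U, ISConv xj I x → {j | xj j ∉ U} ∈ I

/-- The family `IGS(X)`. -/
def memIGS (X : Type u) [TopologicalSpace X] (U : Set X) : Prop :=
  ∀ (J : Type u) [Preorder J], Nonempty J → (∀ a b : J, ∃ c, a ≤ c ∧ b ≤ c) →
    ∀ (xj : J → X) (I : Set (Set J)), IsIdeal I →
      ∀ x ∈ U, IGSConv xj I x → {j | xj j ∉ U} ∈ I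

/-- If `U` is an upper set and `U = U^{↓≪}` in a monotone determined space,
then `U` is monotone determined open. -/
theorem stmt_0 [TopologicalSpace X] [T0Space X] (hX : MonDet X)
    (U : Set X) (hup : U = upSet U) (heq : U = lowApprox U) :
    MDOpen U := by
  intro D hD x hx hconv
  have hx' : x ∈ lowApprox U := heq ▸ hx
  obtain ⟨-, y, hy, hyU⟩ := hx'
  obtain ⟨d, hd, hyd⟩ := hy D hD hconv
  exact ⟨d, hd, hup ▸ ⟨y, hyU, hyd⟩⟩
end

section
/- Let X be a monotone determined space. The following are equivalent: (1) X is a c-space; (2) int(A) = A^{↓≪} for every upper set A ⊆ X; (3) cl(B) = B^{↑≪} for every lower set B ⊆ X. -/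
open Set Topology

universe u v

variable {X : Type u}

section Aux

variable [TopologicalSpace X]

lemma sle_refl (x : X) : sle x x := subset_closure rfl

lemma sle_trans {x y z : X} (h1 : sle x y) (h2 : sle y z) : sle x z := by
  have : closure ({y} : Set X) ⊆ closure ({z} : Set X) := by
    have : ({y} : Set X) ⊆ closure {z} := by
      intro a ha; rw [Set.mem_singleton_iff] at ha; subst ha; exact h2
    simpa using closure_mono this
  exact this h1

lemma mem_open_of_sle {U : Set X} (hU : IsOpen U) {x y : X} (hx : x ∈ U) (h : sle x y) :
    y ∈ U := by
  rcases (mem_closure_iff.1 h) U hU hx with ⟨b, hbU, hb⟩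
  rw [Set.mem_singleton_iff] at hb; subst hb; exact hbU

lemma open_upper {U : Set X} (hU : IsOpen U) : U = upSet U := by
  apply Set.Subset.antisymm
  · intro x hx; exact ⟨x, hx, sle_refl x⟩
  · rintro x ⟨a, ha, hax⟩; exact mem_open_of_sle hU ha hax

lemma dwb_le {x y : X} (h : dwb x y) : sle x y := by
  have hD : DirSet ({y} : Set X) :=
    ⟨⟨y, rfl⟩, fun a ha b hb => ⟨y, rfl, by
      rw [Set.mem_singleton_iff] at ha hb; subst ha; subst hb
      exact ⟨sle_refl _, sle_refl _⟩⟩⟩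
  have hc : DConv ({y} : Set X) y := fun U _ hyU => ⟨y, rfl, hyU⟩
  rcases h _ hD hc with ⟨d, hd, hxd⟩
  rw [Set.mem_singleton_iff] at hd; subst hd; exact hxd

lemma dwb_of_sle_right {x y y' : X} (h : dwb x y) (h' : sle y y') : dwb x y' := by
  intro D hD hc
  exact h D hD (fun U hU hyU => hc U hU (mem_open_of_sle hU hyU h'))

end Aux

/-- For a monotone determined space `X`, TFAE:
(1) `X` is a c-space; (2) `int A = A^{↓≪}` for every upper set `A`;
(3) `cl B = B^{↑≪}` for every lower set `B`. -/
theorem stmt_1 [TopologicalSpace X] [T0Space X] (hX : MonDet X) :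
    List.TFAE [CSpace X,
      ∀ A : Set X, A = upSet A → interior A = lowApprox A,
      ∀ B : Set X, B = downSet B → closure B = upApprox B] := by
  tfae_have 1 → 2
  | h1 => by
    intro A hA
    apply Set.Subset.antisymm
    · -- interior A ⊆ lowApprox A
      intro x hx
      rcases h1 (interior A) isOpen_interior x hx with ⟨z, hz1, hz2⟩
      have hzA : z ∈ A := interior_subset (hz2 ⟨z, rfl, sle_refl z⟩)
      refine ⟨interior_subset hx, z, ?_, hzA⟩
      intro D hD hc
      rcases hc (interior (upSet {z})) isOpen_interior hz1 with ⟨d, hdD, hdi⟩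
      rcases interior_subset hdi with ⟨a, ha, had⟩
      rw [Set.mem_singleton_iff] at ha; subst ha
      exact ⟨d, hdD, had⟩
    · -- lowApprox A ⊆ interior A
      rintro x ⟨hxA, y, hdwb, hyA⟩
      set D : Set X := {z | x ∈ interior (upSet {z})} with hDdef
      have hDdir : DirSet D := by
        constructor
        · rcases h1 Set.univ isOpen_univ x trivial with ⟨z, hz1, _⟩
          exact ⟨z, hz1⟩
        · intro a ha b hb
          rcases h1 (interior (upSet {a}) ∩ interior (upSet {b}))
            (isOpen_interior.inter isOpen_interior) x ⟨ha, hb⟩ with ⟨c, hc1, hc2⟩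
          have hcc : c ∈ upSet ({c} : Set X) := ⟨c, rfl, sle_refl c⟩
          have hca : c ∈ upSet ({a} : Set X) := interior_subset (hc2 hcc).1
          have hcb : c ∈ upSet ({b} : Set X) := interior_subset (hc2 hcc).2
          rcases hca with ⟨a', ha', hac⟩; rw [Set.mem_singleton_iff] at ha'; subst ha'
          rcases hcb with ⟨b', hb', hbc⟩; rw [Set.mem_singleton_iff] at hb'; subst hb'
          exact ⟨c, hc1, hac, hbc⟩
      have hDconv : DConv D x := by
        intro U hU hxU
        rcases h1 U hU x hxU with ⟨z, hz1, hz2⟩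
        exact ⟨z, hz1, hz2 ⟨z, rfl, sle_refl z⟩⟩
      rcases hdwb D hDdir hDconv with ⟨d, hdD, hyd⟩
      have hsub : upSet ({d} : Set X) ⊆ upSet ({y} : Set X) := by
        rintro w ⟨d', hd', hdw⟩
        rw [Set.mem_singleton_iff] at hd'; subst hd'
        exact ⟨y, rfl, sle_trans hyd hdw⟩
      have hxint : x ∈ interior (upSet ({y} : Set X)) := interior_mono hsub hdD
      have hsubA : upSet ({y} : Set X) ⊆ A := by
        rintro w ⟨y', hy', hyw⟩
        rw [Set.mem_singleton_iff] at hy'; subst hy'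
        rw [hA]; exact ⟨_, hyA, hyw⟩
      exact interior_mono hsubA hxint
  tfae_have 2 → 3
  | h2 => by
    intro B hB
    apply Set.Subset.antisymm
    · -- closure B ⊆ upApprox B
      intro x hx y hy
      by_contra hyn
      set A : Set X := (downSet B)ᶜ with hAdef
      have hAup : A = upSet A := by
        apply Set.Subset.antisymm
        · intro a ha; exact ⟨a, ha, sle_refl a⟩
        · rintro w ⟨a, ha, haw⟩
          intro hw
          rcases hw with ⟨b, hb, hwb⟩
          exact ha ⟨b, hb, sle_trans haw hwb⟩
      have hxA : x ∈ A := by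
        rw [hAup]; exact ⟨y, hyn, dwb_le hy⟩
      have hxint : x ∈ interior A := by
        rw [h2 A hAup]; exact ⟨hxA, y, hy, hyn⟩
      rcases (mem_closure_iff.1 hx) (interior A) isOpen_interior hxint with ⟨b, hbi, hbB⟩
      exact (interior_subset hbi) ⟨b, hbB, sle_refl b⟩
    · -- upApprox B ⊆ closure B
      intro x hx
      rw [mem_closure_iff]
      intro U hU hxU
      have hUup := open_upper hU
      have : x ∈ lowApprox U := by
        rw [← h2 U hUup, hU.interior_eq]; exact hxU
      rcases this with ⟨_, y, hdwb, hyU⟩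
      have hyB : y ∈ downSet B := hx hdwb
      rw [← hB] at hyB
      exact ⟨y, hyU, hyB⟩
  tfae_have 3 → 1
  | h3 => by
    intro U hU y hyU
    -- Step a: find w ∈ U with w ≪_d y
    have hBlow : (Uᶜ : Set X) = downSet Uᶜ := by
      apply Set.Subset.antisymm
      · intro a ha; exact ⟨a, ha, sle_refl a⟩
      · rintro z ⟨a, haU, hza⟩
        intro hzU
        exact haU (mem_open_of_sle hU hzU hza)
    have hclB : closure (Uᶜ : Set X) = upApprox Uᶜ := h3 _ hBlow
    have hyncl : y ∉ closure (Uᶜ : Set X) := by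
      rw [hU.isClosed_compl.closure_eq]
      simpa using hyU
    rw [hclB] at hyncl
    have : ∃ w, dwb w y ∧ w ∉ downSet (Uᶜ : Set X) := by
      by_contra hcon
      push_neg at hcon
      exact hyncl fun w hw => hcon w hw
    rcases this with ⟨w, hwy, hwn⟩
    rw [← hBlow] at hwn
    have hwU : w ∈ U := by simpa using hwn
    refine ⟨w, ?_, ?_⟩
    · -- y ∈ interior (upSet {w})
      set B' : Set X := (upSet ({w} : Set X))ᶜ with hB'def
      have hB'low : B' = downSet B' := by
        apply Set.Subset.antisymm
        · intro a ha; exact ⟨a, ha, sle_refl a⟩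
        · rintro z ⟨a, haB, hza⟩
          intro hz
          rcases hz with ⟨w', hw', hwz⟩
          rw [Set.mem_singleton_iff] at hw'; subst hw'
          exact haB ⟨_, rfl, sle_trans hwz hza⟩
      have hclB' : closure B' = upApprox B' := h3 _ hB'low
      have hyn : y ∉ upApprox B' := by
        intro hmem
        rcases hmem hwy with ⟨a, haB', hwa⟩
        exact haB' ⟨w, rfl, hwa⟩
      rw [← hclB'] at hyn
      have : y ∈ (closure B')ᶜ := hyn
      rwa [hB'def, closure_compl, compl_compl] at this
    · -- upSet {w} ⊆ U
      rintro z ⟨w', hw', hwz⟩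
      rw [Set.mem_singleton_iff] at hw'; subst hw'
      exact mem_open_of_sle hU hwU hwz
  tfae_finish
end

section
/- Let X be a monotone determined space that is a c-space, A ⊆ X and x ∈ X. Then x ∈ cl(A) if and only if ⇓_d x ⊆ ↓A. -/
open Set Topology

universe u v

variable {X : Type u}

lemma sle_refl' [TopologicalSpace X] (a : X) : sle a a := subset_closure rfl

lemma sle_trans' [TopologicalSpace X] {a b c : X} (h1 : sle a b) (h2 : sle b c) : sle a c := by
  have : closure ({b} : Set X) ⊆ closure ({c} : Set X) := by
    rw [← closure_closure (s := ({c} : Set X))]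
    exact closure_mono (Set.singleton_subset_iff.mpr h2)
  exact this h1

lemma mem_upSet_singleton [TopologicalSpace X] {z w : X} (h : w ∈ upSet ({z} : Set X)) :
    sle z w := by
  obtain ⟨z', hz', hs⟩ := h
  cases hz'; exact hs

/-- In a monotone determined c-space, `x ∈ cl A ↔ ⇓_d x ⊆ ↓A`. -/
theorem stmt_2 [TopologicalSpace X] [T0Space X] (hX : MonDet X) (hc : CSpace X)
    (A : Set X) (x : X) :
    x ∈ closure A ↔ dDown x ⊆ downSet A := by
  constructor
  · intro hx y hy
    set D : Set X := {z : X | x ∈ interior (upSet ({z} : Set X))} with hDdef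
    have hconv : DConv D x := by
      intro U hU hxU
      obtain ⟨z, hz1, hz2⟩ := hc U hU x hxU
      exact ⟨z, hz1, hz2 ⟨z, rfl, sle_refl' z⟩⟩
    have hdir : DirSet D := by
      refine ⟨?_, ?_⟩
      · obtain ⟨z, hz1, _⟩ := hc Set.univ isOpen_univ x (Set.mem_univ x)
        exact ⟨z, hz1⟩
      · intro a ha b hb
        obtain ⟨c, hc1, hc2⟩ := hc (interior (upSet ({a} : Set X)) ∩
            interior (upSet ({b} : Set X)))
          (IsOpen.inter isOpen_interior isOpen_interior) x ⟨ha, hb⟩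
        have hcc : c ∈ interior (upSet ({a} : Set X)) ∩ interior (upSet ({b} : Set X)) :=
          hc2 ⟨c, rfl, sle_refl' c⟩
        exact ⟨c, hc1, mem_upSet_singleton (interior_subset hcc.1),
          mem_upSet_singleton (interior_subset hcc.2)⟩
    have hDsub : D ⊆ downSet A := by
      intro z hz
      obtain ⟨a, haU, haA⟩ := (mem_closure_iff.mp hx) _ isOpen_interior hz
      exact ⟨a, haA, mem_upSet_singleton (interior_subset haU)⟩
    obtain ⟨d, hdD, hyd⟩ := hy D hdir hconv
    obtain ⟨a, haA, hda⟩ := hDsub hdD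
    exact ⟨a, haA, sle_trans' hyd hda⟩
  · intro h
    by_contra hx
    obtain ⟨z, hz1, hz2⟩ := hc (closure A)ᶜ isClosed_closure.isOpen_compl x hx
    have hzd : z ∈ dDown x := by
      intro D hD hconv
      obtain ⟨d, hd1, hd2⟩ := hconv (interior (upSet ({z} : Set X))) isOpen_interior hz1
      exact ⟨d, hd1, mem_upSet_singleton (interior_subset hd2)⟩
    obtain ⟨a, haA, hza⟩ := h hzd
    exact hz2 ⟨z, rfl, hza⟩ (subset_closure haA)
end

section
/- Every monotone determined space that is a c-space has one-step closure; that is, if X is a monotone determined c-space, then Ã = cl(A) for every subset A ⊆ X. -/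
open Set Topology

universe u v

variable {X : Type u}

/-- Every monotone determined c-space has one-step closure. -/
theorem stmt_3 [TopologicalSpace X] [T0Space X] (hX : MonDet X) (hc : CSpace X) :
    OneStepClosure X := by
  intro A
  apply Set.Subset.antisymm
  · -- tilde A ⊆ closure A
    rintro x ⟨D, _, hD, hconv⟩
    rw [mem_closure_iff]
    intro U hU hxU
    obtain ⟨d, hdD, hdU⟩ := hconv U hU hxU
    obtain ⟨a, haA, hda⟩ := (hD hdD).1
    have : a ∈ U := by
      have := mem_closure_iff.mp hda U hU hdU
      simpa using this
    exact ⟨a, this, haA⟩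
  · -- closure A ⊆ tilde A
    intro x hx
    -- key claim: for any open U ∋ x, there is z ∈ U ∩ ↓A ∩ ↓x with x ∈ int(↑z)
    have key : ∀ U : Set X, IsOpen U → x ∈ U →
        ∃ z : X, z ∈ U ∧ z ∈ downSet A ∧ sle z x ∧ x ∈ interior (upSet {z}) := by
      intro U hU hxU
      obtain ⟨z, hz1, hz2⟩ := hc U hU x hxU
      obtain ⟨a, haI, haA⟩ := mem_closure_iff.mp hx (interior (upSet {z})) isOpen_interior hz1
      have hza : sle z a := by
        obtain ⟨w, hw, hwa⟩ := interior_subset haI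
        rcases hw with rfl
        exact hwa
      have hzx : sle z x := by
        obtain ⟨w, hw, hwx⟩ := interior_subset hz1
        rcases hw with rfl
        exact hwx
      have hzU : z ∈ U := hz2 ⟨z, rfl, subset_closure rfl⟩
      exact ⟨z, hzU, ⟨a, haA, hza⟩, hzx, hz1⟩
    refine ⟨{y | y ∈ downSet A ∧ sle y x ∧ x ∈ interior (upSet {y})}, ⟨?_, ?_⟩, ?_, ?_⟩
    · obtain ⟨z, _, h1, h2, h3⟩ := key Set.univ isOpen_univ (Set.mem_univ x)
      exact ⟨z, h1, h2, h3⟩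
    · rintro a ⟨_, _, ha3⟩ b ⟨_, _, hb3⟩
      obtain ⟨z, hzW, hz1, hz2, hz3⟩ := key (interior (upSet {a}) ∩ interior (upSet {b}))
        (isOpen_interior.inter isOpen_interior) ⟨ha3, hb3⟩
      have haz : sle a z := by
        obtain ⟨w, hw, hwz⟩ := interior_subset hzW.1
        rcases hw with rfl; exact hwz
      have hbz : sle b z := by
        obtain ⟨w, hw, hwz⟩ := interior_subset hzW.2
        rcases hw with rfl; exact hwz
      exact ⟨z, ⟨hz1, hz2, hz3⟩, haz, hbz⟩
    · rintro y ⟨hy1, hy2, _⟩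
      exact ⟨hy1, ⟨x, rfl, hy2⟩⟩
    · intro U hU hxU
      obtain ⟨z, hzU, h1, h2, h3⟩ := key U hU hxU
      exact ⟨z, ⟨h1, h2, h3⟩, hzU⟩
end

section
/- Every monotone determined space having one-step closure is d-meet continuous; that is, if X is a monotone determined space with Ã = cl(A) for every A ⊆ X, then for every directed set D ⊆ X and every x ∈ X with D →_τ x, we have x ∈ cl(↓D ∩ ↓x). -/
open Set Topology

universe u v

variable {X : Type u}

/-- Every monotone determined space having one-step closure is
d-meet continuous. -/
theorem stmt_4 [TopologicalSpace X] [T0Space X] (hX : MonDet X)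
    (h : OneStepClosure X) :
    ∀ (D : Set X) (x : X), DirSet D → DConv D x →
      x ∈ closure (downSet D ∩ downSet {x}) := by
  intro D x hD hconv
  have hx : x ∈ closure D := by
    rw [mem_closure_iff]
    intro U hU hxU
    obtain ⟨d, hdD, hdU⟩ := hconv U hU hxU
    exact ⟨d, hdU, hdD⟩
  rw [← h D] at hx
  obtain ⟨E, hE, hEsub, hEconv⟩ := hx
  rw [mem_closure_iff]
  intro U hU hxU
  obtain ⟨e, heE, heU⟩ := hEconv U hU hxU
  exact ⟨e, heU, hEsub heE⟩
end

section
/- Let X and Y be monotone determined spaces and let Y be a continuous retract of X. If X has one-step closure, then Y has one-step closure. -/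
open Set Topology

universe u v

variable {X : Type u}

lemma sle_map {X : Type u} {Y : Type v} [TopologicalSpace X] [TopologicalSpace Y]
    {f : X → Y} (hf : Continuous f) {a b : X} (h : sle a b) : sle (f a) (f b) :=
  map_mem_closure hf h (by simp)

/-- A continuous retract of a monotone determined space with one-step
closure has one-step closure. -/
theorem stmt_6 {Y : Type v} [TopologicalSpace X] [T0Space X]
    [TopologicalSpace Y] [T0Space Y]
    (hX : MonDet X) (hY : MonDet Y)
    (s : Y → X) (r : X → Y) (hs : Continuous s) (hr : Continuous r)
    (hrs : r ∘ s = id) (h : OneStepClosure X) :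
    OneStepClosure Y := by
  intro A
  apply Set.Subset.antisymm
  · -- tilde A ⊆ closure A
    rintro y ⟨D, hD, hsub, hconv⟩
    rw [mem_closure_iff]
    intro U hU hyU
    obtain ⟨d, hdD, hdU⟩ := hconv U hU hyU
    obtain ⟨⟨a, haA, hda⟩, -⟩ := hsub hdD
    obtain ⟨z, hzU, hz⟩ := mem_closure_iff.mp hda U hU hdU
    rcases hz with rfl
    exact ⟨z, hzU, haA⟩
  · intro y hy
    have hsy : s y ∈ closure (s '' A) := map_mem_closure hs hy (mapsTo_image s A)
    rw [← h (s '' A)] at hsy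
    obtain ⟨D, ⟨⟨d0, hd0⟩, hdir⟩, hsub, hconv⟩ := hsy
    have hrsy : r (s y) = y := congrFun hrs y
    refine ⟨r '' D, ⟨⟨r d0, mem_image_of_mem r hd0⟩, ?_⟩, ?_, ?_⟩
    · rintro _ ⟨a, ha, rfl⟩ _ ⟨b, hb, rfl⟩
      obtain ⟨c, hc, hac, hbc⟩ := hdir a ha b hb
      exact ⟨r c, mem_image_of_mem r hc, sle_map hr hac, sle_map hr hbc⟩
    · rintro _ ⟨d, hd, rfl⟩
      obtain ⟨⟨_, ⟨a, haA, rfl⟩, hda⟩, ⟨_, hb, hdb⟩⟩ := hsub hd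
      rcases hb with rfl
      constructor
      · refine ⟨a, haA, ?_⟩
        have := sle_map hr hda
        rwa [show r (s a) = a from congrFun hrs a] at this
      · refine ⟨y, rfl, ?_⟩
        have := sle_map hr hdb
        rwa [hrsy] at this
    · intro U hU hyU
      have : s y ∈ r ⁻¹' U := by simpa [hrsy] using hyU
      obtain ⟨d, hdD, hdU⟩ := hconv (r ⁻¹' U) (hU.preimage hr) this
      exact ⟨r d, mem_image_of_mem r hdD, hdU⟩
end

section
/- Let X be a monotone determined space. Then the following are equivalent: (1) Ã is a lower set for every subset A ⊆ X; (2) D̃ is a lower set for every directed subset D ⊆ X. -/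
open Set Topology

universe u v

variable {X : Type u}

/-- In a monotone determined space, `Ã` is a lower set for all `A`
iff `D̃` is a lower set for all directed `D`. -/
theorem stmt_9 [TopologicalSpace X] [T0Space X] (hX : MonDet X) :
    (∀ A : Set X, tilde A = downSet (tilde A)) ↔
      (∀ D : Set X, DirSet D → tilde D = downSet (tilde D)) := by
  have srefl : ∀ x : X, sle x x := fun x => subset_closure rfl
  have strans : ∀ {a b c : X}, sle a b → sle b c → sle a c := by
    intro a b c h1 h2
    exact closure_minimal (singleton_subset_iff.mpr h2) isClosed_closure h1
  have hsub : ∀ A : Set X, tilde A ⊆ downSet (tilde A) :=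
    fun A x hx => ⟨x, hx, srefl x⟩
  constructor
  · intro h D _; exact h D
  · intro h A
    refine Subset.antisymm (hsub A) ?_
    rintro x ⟨y, hy, hxy⟩
    obtain ⟨D, hD, hDsub, hDconv⟩ := hy
    -- y ∈ tilde D
    have hyD : y ∈ tilde D := ⟨D, hD, fun d hd => ⟨⟨d, hd, srefl d⟩, (hDsub hd).2⟩, hDconv⟩
    have hxD : x ∈ tilde D := by
      rw [h D hD]; exact ⟨y, hyD, hxy⟩
    obtain ⟨E, hE, hEsub, hEconv⟩ := hxD
    refine ⟨E, hE, fun e he => ⟨?_, (hEsub he).2⟩, hEconv⟩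
    obtain ⟨d, hd, hed⟩ := (hEsub he).1
    obtain ⟨a, ha, hda⟩ := (hDsub hd).1
    exact ⟨a, ha, strans hed hda⟩
end

section
/- Let X be a T₀ topological space and U ⊆ X. Then U ∈ IS(X) if and only if U is monotone determined open. -/
open Set Topology

universe u v

variable {X : Type u}

/-- `U ∈ IS(X)` iff `U` is monotone determined open. -/
theorem stmt_13 [TopologicalSpace X] [T0Space X] (U : Set X) :
    memIS X U ↔ MDOpen U := by
  have sle_refl : ∀ a : X, sle a a := fun a => subset_closure rfl
  have sle_trans : ∀ {a b c : X}, sle a b → sle b c → sle a c := by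
    intro a b c hab hbc
    have : closure ({b} : Set X) ⊆ closure ({c} : Set X) :=
      closure_minimal (Set.singleton_subset_iff.2 hbc) isClosed_closure
    exact this hab
  constructor
  · intro h D hD x hxU hconv
    obtain ⟨d0, hd0⟩ := hD.1
    let J := {d // d ∈ D}
    letI : Preorder J :=
      { le := fun a b => sle a.1 b.1
        le_refl := fun a => sle_refl a.1
        le_trans := fun a b c hab hbc => sle_trans hab hbc }
    have hnj : Nonempty J := ⟨⟨d0, hd0⟩⟩
    have hdir : ∀ a b : J, ∃ c, a ≤ c ∧ b ≤ c := by
      intro a b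
      obtain ⟨c, hc, h1, h2⟩ := hD.2 a.1 a.2 b.1 b.2
      exact ⟨⟨c, hc⟩, h1, h2⟩
    let xj : J → X := fun j => j.1
    let I : Set (Set J) := {A | ∃ d ∈ D, A ⊆ {j | ¬ sle d (xj j)}}
    have hI : IsIdeal I := by
      constructor
      · rintro A ⟨d, hd, hA⟩ B hBA
        exact ⟨d, hd, hBA.trans hA⟩
      · rintro A ⟨d1, hd1, hA⟩ B ⟨d2, hd2, hB⟩
        obtain ⟨c, hc, h1, h2⟩ := hD.2 d1 hd1 d2 hd2
        refine ⟨c, hc, ?_⟩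
        rintro j (hj | hj) hcj
        · exact hA hj (sle_trans h1 hcj)
        · exact hB hj (sle_trans h2 hcj)
    have hmem : {j : J | xj j ∉ U} ∈ I :=
      h J hnj hdir xj I hI x hxU ⟨D, hD, hconv, fun d hd => ⟨d, hd, subset_rfl⟩⟩
    obtain ⟨d, hd, hsub⟩ := hmem
    refine ⟨d, hd, ?_⟩
    by_contra hdU
    exact hsub (show xj ⟨d, hd⟩ ∉ U from hdU) (sle_refl d)
  · intro h J _ hnj hdir xj I hI x hxU ⟨D, hD, hconv, hIconv⟩
    obtain ⟨d, hd, hdU⟩ := h D hD x hxU hconv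
    refine hI.1 _ (hIconv d hd) _ ?_
    intro j hj hdj
    -- sle d (xj j) and d ∈ U, U MDOpen hence upper: xj j ∈ U
    apply hj
    obtain ⟨e, he, heU⟩ := h {xj j} ⟨⟨xj j, rfl⟩, by
        rintro a rfl b rfl
        exact ⟨xj j, rfl, sle_refl _, sle_refl _⟩⟩ d hdU
      (by
        intro V hV hdV
        rw [Set.inter_comm]
        exact mem_closure_iff.mp hdj V hV hdV)
    rw [Set.mem_singleton_iff] at he
    exact he ▸ heU
end

section
/- Let X be a T₀ topological space. Then IGS(X) = IS(X) = 𝒟(X), the family of monotone determined open sets of X. -/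
open Set Topology

universe u v

variable {X : Type u}

/-!
A monotone determined open set `U` is an upper set, and for a directed family `ℱ` of finite sets
converging to `x ∈ U` Rudin's lemma gives a directed set meeting every member of `(G \ U)_{G ∈ ℱ}`
whenever all of these are nonempty; it converges to `x` and misses `U`, which is impossible. So
some `G ∈ ℱ` lies in `U`, whence `↑G ⊆ U` and `𝒟(X) ⊆ IGS(X)`. Replacing each `d` of a directed set
by `{d}` turns IS-convergence into IGS-convergence, so `IGS(X) ⊆ IS(X)`. Finally a directed set
`D →_τ x`, viewed as the net of its own points, IS-converges to `x` for the ideal of index sets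
missing some `↑d`, so `IS(X) ⊆ 𝒟(X)`.
-/

theorem IsChain.sInter_inter_nonempty {α : Type*} {c : Set (Set α)} (hc : IsChain (· ⊆ ·) c)
    (hne : c.Nonempty) {G : Set α} (hG : G.Finite) (h : ∀ A ∈ c, (A ∩ G).Nonempty) :
    (⋂₀ c ∩ G).Nonempty := by
  by_contra hempty
  have hescape : ∀ g : G, ∃ A : c, (g : α) ∉ (A : Set α) := by
    intro g
    by_contra! hg
    exact hempty ⟨g, fun A hA => hg ⟨A, hA⟩, g.2⟩
  choose A hA using hescape
  have := hG.to_subtype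
  have := hne.to_subtype
  have hc' : IsChain (· ⊇ ·) c := hc.symm
  obtain ⟨B, hB⟩ := (directedOn_iff_directed.mp hc'.directedOn).finite_le A
  obtain ⟨g, hgB, hgG⟩ := h B B.2
  exact hA ⟨g, hgG⟩ (hB ⟨g, hgG⟩ hgB)

section Rudin

variable {α : Type*} [Preorder α] {F : Set (Set α)} {M : Set α}

def IsLowerSelector (F : Set (Set α)) (A : Set α) : Prop :=
  A ⊆ ⋃₀ F ∧ (∀ x ∈ A, ∀ y ∈ ⋃₀ F, y ≤ x → y ∈ A) ∧ ∀ G ∈ F, (A ∩ G).Nonempty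

theorem isLowerSelector_sUnion (hF : ∀ G ∈ F, G.Nonempty) : IsLowerSelector F (⋃₀ F) :=
  ⟨subset_rfl, fun _ _ _ hy _ => hy, fun G hG =>
    let ⟨g, hg⟩ := hF G hG
    ⟨g, ⟨G, hG, hg⟩, hg⟩⟩

theorem exists_minimal_isLowerSelector (hF : ∀ G ∈ F, G.Finite ∧ G.Nonempty) :
    ∃ M, Minimal (IsLowerSelector F) M := by
  refine zorn_superset {A | IsLowerSelector F A} fun c hcS hc => ?_
  rcases c.eq_empty_or_nonempty with rfl | hne
  · exact ⟨⋃₀ F, isLowerSelector_sUnion fun G hG => (hF G hG).2, by simp⟩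
  obtain ⟨A₀, hA₀⟩ := hne
  refine ⟨⋂₀ c, ⟨?_, ?_, ?_⟩, fun A hA => sInter_subset_of_mem hA⟩
  · exact (sInter_subset_of_mem hA₀).trans (hcS hA₀).1
  · exact fun x hx y hy hyx A hA => (hcS hA).2.1 x (hx A hA) y hy hyx
  · exact fun G hG => hc.sInter_inter_nonempty ⟨A₀, hA₀⟩ (hF G hG).1 fun A hA => (hcS hA).2.2 G hG

/-- If no member of `F` lay entirely above `a`, removing `↑a` from `M` would leave a smaller
lower selector. -/
theorem Minimal.exists_forall_le_of_isLowerSelector (hM : Minimal (IsLowerSelector F) M)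
    {a : α} (ha : a ∈ M) : ∃ G ∈ F, ∀ z ∈ M ∩ G, a ≤ z := by
  by_contra! hcon
  have hsmaller : IsLowerSelector F (M \ Ici a) := by
    refine ⟨sdiff_subset.trans hM.prop.1, fun x hx y hy hyx => ?_, fun G hG => ?_⟩
    · exact ⟨hM.prop.2.1 x hx.1 y hy hyx, fun hay => hx.2 (le_trans hay hyx)⟩
    · obtain ⟨z, ⟨hzM, hzG⟩, hnle⟩ := hcon G hG
      exact ⟨z, ⟨hzM, hnle⟩, hzG⟩
  have := hM.eq_of_subset hsmaller sdiff_subset ▸ ha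
  exact this.2 le_rfl

theorem rudin_lemma (hne : F.Nonempty) (hF : ∀ G ∈ F, G.Finite ∧ G.Nonempty)
    (hdir : DirectedOn (fun G H : Set α => H ⊆ upperClosure G) F) :
    ∃ D ⊆ ⋃₀ F, D.Nonempty ∧ DirectedOn (· ≤ ·) D ∧ ∀ G ∈ F, (D ∩ G).Nonempty := by
  obtain ⟨M, hM⟩ := exists_minimal_isLowerSelector hF
  obtain ⟨hMsub, hMlower, hMmeets⟩ := hM.prop
  refine ⟨M, hMsub, ?_, fun a ha b hb => ?_, hMmeets⟩
  · obtain ⟨G, hG⟩ := hne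
    exact (hMmeets G hG).mono inter_subset_left
  obtain ⟨Ga, hGa, haGa⟩ := hM.exists_forall_le_of_isLowerSelector ha
  obtain ⟨Gb, hGb, hbGb⟩ := hM.exists_forall_le_of_isLowerSelector hb
  obtain ⟨G, hG, hGa', hGb'⟩ := hdir Ga hGa Gb hGb
  obtain ⟨c, hcM, hcG⟩ := hMmeets G hG
  obtain ⟨a', ha'Ga, ha'c⟩ := mem_upperClosure.mp (hGa' hcG)
  obtain ⟨b', hb'Gb, hb'c⟩ := mem_upperClosure.mp (hGb' hcG)
  have ha'M := hMlower c hcM a' ⟨Ga, hGa, ha'Ga⟩ ha'c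
  have hb'M := hMlower c hcM b' ⟨Gb, hGb, hb'Gb⟩ hb'c
  exact ⟨c, hcM, (haGa a' ⟨ha'M, ha'Ga⟩).trans ha'c, (hbGb b' ⟨hb'M, hb'Gb⟩).trans hb'c⟩

theorem DirectedOn.image_diff_of_isUpperSet {U : Set α}
    (hdir : DirectedOn (fun G H : Set α => H ⊆ upperClosure G) F) (hU : IsUpperSet U) :
    DirectedOn (fun G H : Set α => H ⊆ upperClosure G) ((· \ U) '' F) := by
  rintro _ ⟨G₁, hG₁, rfl⟩ _ ⟨G₂, hG₂, rfl⟩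
  obtain ⟨G, hG, h₁, h₂⟩ := hdir G₁ hG₁ G₂ hG₂
  have hlift : ∀ {H}, G ⊆ upperClosure H → G \ U ⊆ upperClosure (H \ U) := by
    intro H hGH g ⟨hgG, hgU⟩
    obtain ⟨a, haH, hag⟩ := mem_upperClosure.mp (hGH hgG)
    exact mem_upperClosure.mpr ⟨a, ⟨haH, fun haU => hgU (hU hag haU)⟩, hag⟩
  exact ⟨G \ U, mem_image_of_mem _ hG, hlift h₁, hlift h₂⟩

theorem DirectedOn.isIdeal_setOf_exists_forall_not_le {J : Type*} {D : Set α}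
    (hD : DirectedOn (· ≤ ·) D) (f : J → α) :
    IsIdeal {A : Set J | ∃ d ∈ D, ∀ j ∈ A, ¬ d ≤ f j} := by
  refine ⟨fun A ⟨d, hd, hA⟩ B hBA => ⟨d, hd, fun j hj => hA j (hBA hj)⟩, ?_⟩
  rintro A ⟨d₁, hd₁, hA⟩ B ⟨d₂, hd₂, hB⟩
  obtain ⟨d, hd, h₁, h₂⟩ := hD d₁ hd₁ d₂ hd₂
  refine ⟨d, hd, fun j hj hdj => ?_⟩
  rcases hj with hj | hj
  · exact hA j hj (h₁.trans hdj)
  · exact hB j hj (h₂.trans hdj)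

end Rudin

section Specialization

variable [TopologicalSpace X] {U : Set X}

attribute [local instance] specializationPreorder

theorem sle_iff_le {x y : X} : sle x y ↔ x ≤ y := specializes_iff_mem_closure.symm

theorem upSet_eq_upperClosure (A : Set X) : upSet A = upperClosure A := by
  ext; simp [upSet, sle_iff_le]

theorem dirSet_iff {D : Set X} : DirSet D ↔ D.Nonempty ∧ DirectedOn (· ≤ ·) D := by
  simp [DirSet, DirectedOn, sle_iff_le]

theorem dirFam_iff {F : Set (Set X)} : DirFam F ↔
    (∀ G ∈ F, G.Finite ∧ G.Nonempty) ∧ DirectedOn (fun G H : Set X => H ⊆ upperClosure G) F := by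
  simp [DirFam, DirectedOn, upSet_eq_upperClosure]

theorem MDOpen.isUpperSet (hU : MDOpen U) : IsUpperSet U := by
  intro x y hxy hx
  have hconv : DConv {y} x := fun V hV hxV => ⟨y, rfl, hxy.mem_open hV hxV⟩
  obtain ⟨_, rfl, hyU⟩ := hU {y} (dirSet_iff.mpr ⟨singleton_nonempty y, directedOn_singleton y⟩)
    x hx hconv
  exact hyU

theorem MDOpen.exists_mem_subset (hU : MDOpen U) {F : Set (Set X)} (hF : DirFam F) {x : X}
    (hFx : FConv F x) (hx : x ∈ U) : ∃ G ∈ F, G ⊆ U := by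
  obtain ⟨hfin, hdir⟩ := dirFam_iff.mp hF
  by_contra! hout
  obtain ⟨G₀, hG₀, -⟩ := hFx univ isOpen_univ (mem_univ x)
  obtain ⟨D, hDsub, hDne, hDdir, hDmeets⟩ := rudin_lemma (F := (· \ U) '' F)
    ⟨G₀ \ U, mem_image_of_mem _ hG₀⟩
    (by
      rintro _ ⟨G, hG, rfl⟩
      exact ⟨(hfin G hG).1.sdiff, sdiff_nonempty.mpr (hout G hG)⟩)
    (hdir.image_diff_of_isUpperSet hU.isUpperSet)
  have hDx : DConv D x := by
    intro V hV hxV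
    obtain ⟨G, hG, hGV⟩ := hFx V hV hxV
    obtain ⟨d, hdD, hdG, -⟩ := hDmeets (G \ U) (mem_image_of_mem _ hG)
    exact ⟨d, hdD, hGV hdG⟩
  obtain ⟨d, hdD, hdU⟩ := hU D (dirSet_iff.mpr ⟨hDne, hDdir⟩) x hx hDx
  obtain ⟨_, ⟨G, -, rfl⟩, -, hdU'⟩ := hDsub hdD
  exact hdU' hdU

theorem ISConv.igsConv {J : Type v} {xj : J → X} {I : Set (Set J)} {x : X}
    (h : ISConv xj I x) : IGSConv xj I x := by
  obtain ⟨D, hD, hDx, hDI⟩ := h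
  obtain ⟨hDne, hDdir⟩ := dirSet_iff.mp hD
  refine ⟨(fun d => {d}) '' D, dirFam_iff.mpr ⟨?_, ?_⟩, ?_, ?_⟩
  · rintro _ ⟨d, -, rfl⟩
    exact ⟨finite_singleton d, singleton_nonempty d⟩
  · rintro _ ⟨d₁, hd₁, rfl⟩ _ ⟨d₂, hd₂, rfl⟩
    obtain ⟨d, hd, h₁, h₂⟩ := hDdir d₁ hd₁ d₂ hd₂
    exact ⟨{d}, mem_image_of_mem _ hd, by simpa using h₁, by simpa using h₂⟩
  · intro V hV hxV
    obtain ⟨d, hdD, hdV⟩ := hDx V hV hxV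
    exact ⟨{d}, mem_image_of_mem _ hdD, singleton_subset_iff.mpr hdV⟩
  · rintro _ ⟨d, hd, rfl⟩
    simpa [upSet] using hDI d hd

theorem memIS_of_memIGS (h : memIGS X U) : memIS X U :=
  fun J _ hne hdir xj I hI x hx hconv => h J hne hdir xj I hI x hx hconv.igsConv

theorem MDOpen.memIGS (hU : MDOpen U) : memIGS X U := by
  intro J _ _ _ xj I hI x hx ⟨F, hF, hFx, hFI⟩
  obtain ⟨G, hG, hGU⟩ := hU.exists_mem_subset hF hFx hx
  refine hI.1 _ (hFI G hG) _ fun j hj hjG => hj ?_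
  rw [upSet_eq_upperClosure] at hjG
  exact upperClosure_min hGU hU.isUpperSet hjG

theorem mdOpen_of_memIS (h : memIS X U) : MDOpen U := by
  intro D hD x hx hDx
  obtain ⟨hDne, hDdir⟩ := dirSet_iff.mp hD
  have := hDne.to_subtype
  have hJdir : ∀ a b : D, ∃ c, a ≤ c ∧ b ≤ c := fun a b =>
    let ⟨c, hc, hac, hbc⟩ := hDdir a a.2 b b.2
    ⟨⟨c, hc⟩, hac, hbc⟩
  have hconv : ISConv (Subtype.val : D → X) {A | ∃ d ∈ D, ∀ j ∈ A, ¬ d ≤ j.1} x :=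
    ⟨D, hD, hDx, fun d hd => ⟨d, hd, fun j hj => by rwa [← sle_iff_le]⟩⟩
  obtain ⟨d, hd, hdU⟩ := h D ‹_› hJdir Subtype.val _
    (hDdir.isIdeal_setOf_exists_forall_not_le Subtype.val) x hx hconv
  by_contra! hDU
  exact hdU ⟨d, hd⟩ (hDU.subset ⟨hd, ·⟩) le_rfl

end Specialization

theorem stmt_16_general [TopologicalSpace X] :
    {U : Set X | memIGS X U} = {U : Set X | memIS X U} ∧
      {U : Set X | memIS X U} = {U : Set X | MDOpen U} :=
  ⟨Set.ext fun _ => ⟨memIS_of_memIGS, fun h => (mdOpen_of_memIS h).memIGS⟩,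
    Set.ext fun _ => ⟨mdOpen_of_memIS, fun h => memIS_of_memIGS h.memIGS⟩⟩

/-- `IGS(X) = IS(X) = 𝒟(X)` for a T₀ space `X`. -/
theorem stmt_16 [TopologicalSpace X] [T0Space X] :
    {U : Set X | memIGS X U} = {U : Set X | memIS X U} ∧
      {U : Set X | memIS X U} = {U : Set X | MDOpen U} :=
  stmt_16_general
end

section
/- Let X be a monotone determined space. Then X is locally hypercompact if and only if for every net (x_j)_{j∈J} in X, every ideal I on J, and every x ∈ X: (x_j) IGS-converges to x with respect to I if and only if (x_j) I-converges to x with respect to τ. -/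
open Set Topology

universe u v

variable {X : Type u}

lemma open_upward [TopologicalSpace X] {U : Set X} (hU : IsOpen U) {a b : X}
    (ha : a ∈ U) (h : sle a b) : b ∈ U := by
  obtain ⟨c, hcU, hc⟩ := mem_closure_iff.mp h U hU ha
  rw [mem_singleton_iff] at hc
  rwa [hc] at hcU

lemma self_subset_upSet [TopologicalSpace X] (F : Set X) : F ⊆ upSet F :=
  fun a ha => ⟨a, ha, sle_refl' a⟩

/-- A monotone determined space is locally hypercompact iff
IGS-convergence coincides with I-convergence with respect to `τ` for all nets and
ideals. -/
theorem stmt_17 [tX : TopologicalSpace X] [T0Space X] (hX : MonDet X) :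
    LocallyHypercompact X ↔
      ∀ (J : Type u) [Preorder J], Nonempty J → (∀ a b : J, ∃ c, a ≤ c ∧ b ≤ c) →
        ∀ (xj : J → X) (I : Set (Set J)), IsIdeal I → ∀ x : X,
          (IGSConv xj I x ↔ IConvT tX xj I x) := by
  constructor
  · intro hlh J _ hne hdir xj I hI x
    constructor
    · rintro ⟨F, ⟨hfin, hdirF⟩, hFconv, hFI⟩ U hU hxU
      obtain ⟨G, hGF, hGU⟩ := hFconv U hU hxU
      refine hI.1 _ (hFI G hGF) _ ?_
      intro j hj hjG
      obtain ⟨a, haG, hsle⟩ := hjG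
      exact hj (open_upward hU (hGU haG) hsle)
    · intro hIc
      refine ⟨{F | F.Finite ∧ F.Nonempty ∧ x ∈ interior (upSet F)}, ⟨?_, ?_⟩, ?_, ?_⟩
      · exact fun G hG => ⟨hG.1, hG.2.1⟩
      · intro G1 hG1 G2 hG2
        obtain ⟨F, hFfin, hFne, hxF, hFsub⟩ :=
          hlh (interior (upSet G1) ∩ interior (upSet G2))
            (isOpen_interior.inter isOpen_interior) x ⟨hG1.2.2, hG2.2.2⟩
        refine ⟨F, ⟨hFfin, hFne, hxF⟩, ?_⟩
        intro a haF
        have := hFsub (self_subset_upSet F haF)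
        exact ⟨interior_subset this.1, interior_subset this.2⟩
      · intro U hU hxU
        obtain ⟨F, hFfin, hFne, hxF, hFsub⟩ := hlh U hU x hxU
        exact ⟨F, ⟨hFfin, hFne, hxF⟩, (self_subset_upSet F).trans hFsub⟩
      · intro G hG
        refine hI.1 _ (hIc (interior (upSet G)) isOpen_interior hG.2.2) _ ?_
        intro j hj hjG
        exact hj (interior_subset hjG)
  · intro h U hU x hxU
    let J := {p : X × Set X // IsOpen p.2 ∧ x ∈ p.2 ∧ p.1 ∈ p.2}
    letI : Preorder J :=
      { le := fun p q => q.val.2 ⊆ p.val.2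
        le_refl := fun p => subset_refl _
        le_trans := fun p q r hpq hqr => Set.Subset.trans hqr hpq }
    have hne : Nonempty J := ⟨⟨(x, Set.univ), isOpen_univ, mem_univ x, mem_univ x⟩⟩
    have hdir : ∀ a b : J, ∃ c, a ≤ c ∧ b ≤ c := fun a b =>
      ⟨⟨(x, a.val.2 ∩ b.val.2), a.2.1.inter b.2.1, ⟨a.2.2.1, b.2.2.1⟩, ⟨a.2.2.1, b.2.2.1⟩⟩,
        inter_subset_left, inter_subset_right⟩
    let xj : J → X := fun p => p.val.1
    let I : Set (Set J) := {A | ∃ V, IsOpen V ∧ x ∈ V ∧ ∀ j ∈ A, ¬ (j.val.2 ⊆ V)}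
    have hI : IsIdeal I := by
      constructor
      · rintro A ⟨V, hV, hxV, hA⟩ B hBA
        exact ⟨V, hV, hxV, fun j hj => hA j (hBA hj)⟩
      · rintro A ⟨V, hV, hxV, hA⟩ B ⟨W, hW, hxW, hB⟩
        refine ⟨V ∩ W, hV.inter hW, ⟨hxV, hxW⟩, ?_⟩
        rintro j (hj | hj) hsub
        · exact hA j hj (hsub.trans inter_subset_left)
        · exact hB j hj (hsub.trans inter_subset_right)
    have hIc : IConvT tX xj I x := by
      intro U' hU' hx'
      exact ⟨U', hU', hx', fun j hj hsub => hj (hsub j.2.2.2)⟩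
    obtain ⟨F, ⟨hfin, _⟩, hFconv, hFI⟩ := (h J hne hdir xj I hI x).mpr hIc
    obtain ⟨G, hGF, hGU⟩ := hFconv U hU hxU
    refine ⟨G, (hfin G hGF).1, (hfin G hGF).2, ?_, ?_⟩
    · obtain ⟨V, hVopen, hxV, hV⟩ := hFI G hGF
      have hVsub : V ⊆ upSet G := by
        intro a haV
        by_contra haG
        exact hV ⟨(a, V), hVopen, hxV, haV⟩ haG (subset_refl V)
      exact mem_interior.mpr ⟨V, hVsub, hVopen, hxV⟩
    · rintro b ⟨a, haG, hab⟩
      exact open_upward hU (hGU haG) hab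
end
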